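/- arXiv:2603.24452 — 3 statements merged into one kernel-verified Lean document; each statement's English description precedes it below -/
import Mathlib

section
/- Under the normalized setup, there exist constants ε₀, ε₁, ε₂ > 0 depending only on n, m₁, m₂ such that for every H > 0: B_{ε₀R} × (−ε₁H, 0] ⊆ M_H(Q_H) ⊆ B_R × (−ε₂H, 0], where M_H(x,t) := (A_H x, t). -/
open Set MeasureTheory

noncomputable section

abbrev En (n : ℕ) : Type := EuclideanSpace ℝ (Fin n)

namespace PMA

variable {n : ℕ}

/-- The lower half-space `ℝⁿ × (−∞,0]`. -/
def halfSpace (n : ℕ) : Set (En n × ℝ) := univ ×ˢ Iic (0:ℝ)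

/-- The time derivative `u_t`. -/
def timeDeriv (u : En n → ℝ → ℝ) (x : En n) (t : ℝ) : ℝ := deriv (u x) t

/-- The spatial gradient `D_x u`. -/
def spaceGrad (u : En n → ℝ → ℝ) (x : En n) (t : ℝ) : En n := gradient (fun y => u y t) x

/-- The spatial Hessian `D_x² u`, as an `n × n` matrix. -/
def spaceHess (u : En n → ℝ → ℝ) (x : En n) (t : ℝ) : Matrix (Fin n) (Fin n) ℝ :=
  fun i j => iteratedFDeriv ℝ 2 (fun y => u y t) x
    ![EuclideanSpace.single i 1, EuclideanSpace.single j 1]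

/-- A function is parabolically convex on `D` if it is convex in `x` and nonincreasing in `t`. -/
def ParabolicallyConvexOn (D : Set (En n × ℝ)) (u : En n → ℝ → ℝ) : Prop :=
  (∀ t : ℝ, ConvexOn ℝ {x | (x, t) ∈ D} (fun x => u x t)) ∧
  (∀ x : En n, ∀ s t : ℝ, s ≤ t → (x, s) ∈ D → (x, t) ∈ D → u x t ≤ u x s)

/-- The time slice `D(t)`. -/
def slice (D : Set (En n × ℝ)) (t : ℝ) : Set (En n) := {x | (x, t) ∈ D}

/-- Bowl-shaped domain. -/
def IsBowlShaped (D : Set (En n × ℝ)) : Prop :=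
  D ⊆ halfSpace n ∧ (∀ t, Convex ℝ (slice D t)) ∧
  ∀ t₁ t₂ : ℝ, t₁ ≤ t₂ → (slice D t₂).Nonempty → slice D t₁ ⊆ slice D t₂

/-- The parabolic boundary `∂_p D`. -/
def parabolicBoundary (D : Set (En n × ℝ)) : Set (En n × ℝ) :=
  (closure (slice D (sInf {t | (slice D t).Nonempty})) ×ˢ
      ({sInf {t | (slice D t).Nonempty}} : Set ℝ)) ∪
  ⋃ t ∈ Iic (0:ℝ), frontier (slice D t) ×ˢ ({t} : Set ℝ)

/-- Parabolic distance between two points. -/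
def pdist (X Y : En n × ℝ) : ℝ := Real.sqrt (‖X.1 - Y.1‖^2 + |X.2 - Y.2|)

/-- Parabolic distance from a point to a set. -/
def pdistSet (Z : En n × ℝ) (S : Set (En n × ℝ)) : ℝ := sInf (pdist Z '' S)

/-- `C^{2k,k}` regularity on a set: all mixed derivatives `D_x^i D_t^j u` with `i + 2j ≤ 2k`
exist and are continuous. -/
def IsC2kOn (k : ℕ) (u : En n → ℝ → ℝ) (D : Set (En n × ℝ)) : Prop :=
  ∀ i j : ℕ, i + 2*j ≤ 2*k →
    (∀ p ∈ D, ContDiffAt ℝ i (fun y => iteratedDeriv j (u y) p.2) p.1 ∧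
      ContDiffAt ℝ j (u p.1) p.2) ∧
    ContinuousOn
      (fun p : En n × ℝ => iteratedFDeriv ℝ i (fun y => iteratedDeriv j (u y) p.2) p.1) D

/-- A matrix acting on `ℝⁿ`. -/
def mApply (M : Matrix (Fin n) (Fin n) ℝ) (x : En n) : En n :=
  (WithLp.equiv 2 (Fin n → ℝ)).symm (M.mulVec (WithLp.equiv 2 (Fin n → ℝ) x))

/-- The quadratic form `xᵀ A x`. -/
def quadForm (A : Matrix (Fin n) (Fin n) ℝ) (x : En n) : ℝ := ∑ i, ∑ j, A i j * x i * x j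

/-- The dot product `b · x` on `ℝⁿ`. -/
def dotp (b x : En n) : ℝ := ∑ i, b i * x i

/-- Second-order difference quotient `Δ_e² u`. -/
def sdq (u : En n → ℝ → ℝ) (e : En n) (x : En n) (t : ℝ) : ℝ :=
  (u (x + e) t + u (x - e) t - 2 * u x t) / ‖e‖^2

end PMA


private lemma mApply_smul' {n : ℕ} (M : Matrix (Fin n) (Fin n) ℝ) (s : ℝ) (x : En n) :
    PMA.mApply M (s • x) = s • PMA.mApply M x := by
  simp [PMA.mApply, Matrix.mulVec_smul]

private lemma aux_s_le (αn Rh d : ℝ) (hαn : 0 < αn) (hR : 0 < Rh) (hd0 : 0 ≤ d)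
    (hdb : d ≤ αn/4 * Rh + Rh) :
    (d + αn * Rh/4)/(d + αn * Rh/4 + αn * Rh/2) ≤ (1 + αn/2)/(1 + αn) := by
  have h1 : 0 < d + αn * Rh/4 + αn * Rh/2 := by nlinarith
  have h2 : 0 < 1 + αn := by linarith
  rw [div_le_div_iff₀ h1 h2]
  nlinarith [mul_le_mul_of_nonneg_left hdb hαn.le]

private lemma mApply_zero' {n : ℕ} (M : Matrix (Fin n) (Fin n) ℝ) :
    PMA.mApply M (0 : En n) = 0 := by
  simp [PMA.mApply]

set_option maxHeartbeats 2000000 in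
/-- normalization of the sublevel sets `Q_H`. -/
theorem stmt6
    (n : ℕ) (hn : 1 ≤ n) (α : ℝ) (hα : α ∈ Set.Ioo (0:ℝ) 1)
    (f₁ : En n → ℝ) (f₂ : ℝ → ℝ)
    (hf₁pos : ∀ x, 0 < f₁ x) (hf₂pos : ∀ t : ℝ, t ≤ 0 → 0 < f₂ t)
    (hf₁hold : ∃ K : NNReal, HolderWith K α.toNNReal f₁)
    (hf₂hold : ∃ K : NNReal, HolderOnWith K (α/2).toNNReal f₂ (Set.Iic 0))
    (hf₁per : ∀ (x : En n) (i : Fin n), f₁ (x + EuclideanSpace.single i 1) = f₁ x)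
    (hf₂per : ∀ t : ℝ, t ≤ 0 → f₂ (t - 1) = f₂ t)
    (hf₁avg : ∫ x in {x : En n | ∀ i, x i ∈ Set.Icc (0:ℝ) 1}, f₁ x = 1)
    (hf₂avg : ∫ t in Set.Icc (-1:ℝ) 0, f₂ t = 1)
    (lam Λ : ℝ) (hlam : 0 < lam)
    (hfbdd : ∀ (x : En n) (t : ℝ), t ≤ 0 → lam ≤ f₁ x * f₂ t ∧ f₁ x * f₂ t ≤ Λ)
    (u : En n → ℝ → ℝ)
    (hureg : PMA.IsC2kOn 1 u (PMA.halfSpace n))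
    (huconv : PMA.ParabolicallyConvexOn (PMA.halfSpace n) u)
    (m₁ m₂ : ℝ) (hm₁ : 0 < m₁) (hm₂ : 0 < m₂)
    (hut : ∀ (x : En n) (t : ℝ), t ≤ 0 →
      m₁ ≤ -PMA.timeDeriv u x t ∧ -PMA.timeDeriv u x t ≤ m₂)
    (heq : ∀ (x : En n) (t : ℝ), t ≤ 0 →
      -PMA.timeDeriv u x t * (PMA.spaceHess u x t).det = f₁ x * f₂ t)
    (hu0 : u 0 0 = 0) (hDu0 : PMA.spaceGrad u 0 0 = 0)
    (aH : ℝ → Matrix (Fin n) (Fin n) ℝ) (bH : ℝ → En n) (R : ℝ → ℝ)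
    (hdet : ∀ H : ℝ, 0 < H → (aH H).det = 1)
    (hRpos : ∀ H : ℝ, 0 < H → 0 < R H)
    (hJohn : ∀ H : ℝ, 0 < H →
      Metric.ball (0 : En n) ((n : ℝ) ^ (-(3:ℝ)/2) * R H) ⊆
          (fun x => PMA.mApply (aH H) x + bH H) '' {x : En n | u x 0 < H} ∧
        (fun x => PMA.mApply (aH H) x + bH H) '' {x : En n | u x 0 < H} ⊆
          Metric.ball (0 : En n) (R H))
    :
    ∃ ε₀ ε₁ ε₂ : ℝ, 0 < ε₀ ∧ 0 < ε₁ ∧ 0 < ε₂ ∧ ∀ H : ℝ, 0 < H →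
      Metric.ball (0 : En n) (ε₀ * R H) ×ˢ Set.Ioc (-(ε₁ * H)) (0:ℝ) ⊆
        (fun p : En n × ℝ => (PMA.mApply (aH H) p.1 + bH H, p.2)) ''
          {p : En n × ℝ | p.2 ≤ 0 ∧ u p.1 p.2 < H} ∧
      (fun p : En n × ℝ => (PMA.mApply (aH H) p.1 + bH H, p.2)) ''
          {p : En n × ℝ | p.2 ≤ 0 ∧ u p.1 p.2 < H} ⊆
        Metric.ball (0 : En n) (R H) ×ˢ Set.Ioc (-(ε₂ * H)) (0:ℝ) := by

  classical
  -- basic constants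
  set αn : ℝ := (n : ℝ) ^ (-(3:ℝ)/2) with hαn_def
  have hn1 : (1:ℝ) ≤ (n:ℝ) := by exact_mod_cast hn
  have hαn : 0 < αn := Real.rpow_pos_of_pos (by linarith) _
  set θ : ℝ := (1 + αn/2)/(1 + αn) with hθ_def
  have hden : (0:ℝ) < 1 + αn := by linarith
  have hθ0 : 0 < θ := div_pos (by linarith) hden
  have hθ1 : θ < 1 := (div_lt_one hden).mpr (by linarith)
  have h1θ : 0 < 1 - θ := by linarith
  -- convexity of the time-0 slice
  have hconv0 : ConvexOn ℝ (Set.univ : Set (En n)) (fun x => u x 0) := by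
    have h := huconv.1 0
    have hset : {x : En n | (x, (0:ℝ)) ∈ PMA.halfSpace n} = Set.univ := by
      ext x; simp [PMA.halfSpace]
    rwa [hset] at h
  -- monotonicity in time
  have hmono : ∀ (x : En n) (t : ℝ), t ≤ 0 → u x 0 ≤ u x t := fun x t ht =>
    huconv.2 x t 0 ht (by simp [PMA.halfSpace, ht]) (by simp [PMA.halfSpace])
  -- time regularity
  have hdiffT : ∀ (x : En n) (t : ℝ), t ≤ 0 → ContDiffAt ℝ 1 (u x) t := by
    intro x t ht
    exact ((hureg 0 1 (by norm_num)).1 (x, t) (by simp [PMA.halfSpace, ht])).2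
  -- Mean value bounds in time
  have hA : ∀ (x : En n) (t : ℝ), t ≤ 0 →
      m₁ * (-t) ≤ u x t - u x 0 ∧ u x t - u x 0 ≤ m₂ * (-t) := by
    intro x t ht
    rcases eq_or_lt_of_le ht with h0 | h0
    · subst h0; simp
    · have hcont : ContinuousOn (u x) (Set.Icc t 0) := fun s hs =>
        ((hdiffT x s hs.2).continuousAt).continuousWithinAt
      have hdiff : DifferentiableOn ℝ (u x) (Set.Ioo t 0) := fun s hs =>
        ((hdiffT x s hs.2.le).differentiableAt one_ne_zero).differentiableWithinAt
      obtain ⟨c, hc, hceq⟩ := exists_deriv_eq_slope (u x) h0 hcont hdiff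
      have hd := hut x c hc.2.le
      simp only [PMA.timeDeriv] at hd
      rw [hceq] at hd
      have hpos : (0:ℝ) < 0 - t := by linarith
      have hflip : -((u x 0 - u x t)/(0 - t)) = (u x t - u x 0)/(0 - t) := by ring
      rw [hflip] at hd
      constructor
      · have := (le_div_iff₀ hpos).mp hd.1
        nlinarith
      · have := (div_le_iff₀ hpos).mp hd.2
        nlinarith
  -- nonnegativity of u(·,0)
  have hnn : ∀ x : En n, 0 ≤ u x 0 := by
    intro x
    set g : En n → ℝ := fun y => u y 0 with hg
    have hgd : ContDiffAt ℝ 1 g 0 := by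
      have h := ((hureg 1 0 (by norm_num)).1 ((0 : En n), (0:ℝ)) (by simp [PMA.halfSpace])).1
      simpa [iteratedDeriv_zero] using h
    have hfz : fderiv ℝ g 0 = 0 := by
      have hgrad : gradient g 0 = 0 := hDu0
      have h2 := congrArg (InnerProductSpace.toDual ℝ (En n)) hgrad
      rw [gradient, LinearIsometryEquiv.apply_symm_apply, map_zero] at h2
      exact h2
    have hfd' : HasFDerivAt g (0 : En n →L[ℝ] ℝ) ((0:ℝ) • x) := by
      rw [zero_smul]
      have hd : DifferentiableAt ℝ g 0 := hgd.differentiableAt one_ne_zero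
      simpa [hfz] using hd.hasFDerivAt
    set φ : ℝ → ℝ := fun s => g (s • x) with hφ
    have hline : HasDerivAt (fun s : ℝ => s • x) ((1:ℝ) • x) 0 :=
      (hasDerivAt_id (0:ℝ)).smul_const x
    have hφd : HasDerivAt φ 0 0 := by
      have h := hfd'.comp_hasDerivAt 0 hline
      simp only [zero_smul, ContinuousLinearMap.zero_apply] at h
      exact h
    have htend : Filter.Tendsto (slope φ 0) (nhdsWithin 0 (Set.Ioi 0)) (nhds 0) :=
      (hasDerivAt_iff_tendsto_slope.mp hφd).mono_left
        (nhdsWithin_mono 0 (fun s hs => Set.mem_compl_singleton_iff.mpr (ne_of_gt hs)))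
    have hev : ∀ᶠ s in nhdsWithin 0 (Set.Ioi 0), slope φ 0 s ≤ φ 1 := by
      filter_upwards [Ioo_mem_nhdsGT_of_mem (Set.mem_Ico.mpr ⟨le_rfl, one_pos⟩)] with s hs
      have hs0 : (0:ℝ) < s := hs.1
      have hconv := hconv0.2 (Set.mem_univ x) (Set.mem_univ (0 : En n)) hs0.le
        (show (0:ℝ) ≤ 1 - s by linarith [hs.2]) (by ring)
      have hφs : φ s ≤ s * φ 1 := by
        simpa [hφ, hg, hu0, smul_zero, smul_eq_mul] using hconv
      have hφ0 : φ 0 = 0 := by simp [hφ, hg, hu0]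
      rw [slope_def_field, hφ0, sub_zero, sub_zero, div_le_iff₀ hs0]
      nlinarith
    have h01 : (0:ℝ) ≤ φ 1 := le_of_tendsto htend hev
    simpa [hφ, hg] using h01
  -- the constants
  refine ⟨αn/4, (1-θ)/(2*m₂), 1/m₁, by positivity, div_pos h1θ (by linarith),
    by positivity, ?_⟩
  intro H hH
  have hR := hRpos H hH
  set ρ : ℝ := αn * R H with hρ_def
  have hρ : 0 < ρ := mul_pos hαn hR
  -- b is in the big ball
  have hbR : ‖bH H‖ < R H := by
    have h0Q : (0 : En n) ∈ {x : En n | u x 0 < H} := by simpa [hu0] using hH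
    have hmemI : bH H ∈ (fun x => PMA.mApply (aH H) x + bH H) '' {x : En n | u x 0 < H} :=
      ⟨0, h0Q, by simp [mApply_zero']⟩
    have hmem := (hJohn H hH).2 hmemI
    simpa [mem_ball_zero_iff] using hmem
  constructor
  · -- first inclusion
    rintro ⟨y, t⟩ ⟨hy, ht⟩
    have hy' : ‖y‖ < αn/4 * R H := by simpa [mem_ball_zero_iff] using hy
    have ht2 : t ≤ 0 := ht.2
    set d : ℝ := ‖y - bH H‖ with hd_def
    have hd0 : 0 ≤ d := norm_nonneg _
    have hdb : d ≤ αn/4 * R H + R H := by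
      calc d ≤ ‖y‖ + ‖bH H‖ := norm_sub_le _ _
        _ ≤ αn/4 * R H + R H := by linarith
    set s : ℝ := (d + ρ/4)/(d + ρ/4 + ρ/2) with hs_def
    have hnum : (0:ℝ) < d + ρ/4 := by linarith
    have hden2 : (0:ℝ) < d + ρ/4 + ρ/2 := by linarith
    have hs0 : 0 < s := div_pos hnum hden2
    have hs1 : s < 1 := (div_lt_one hden2).mpr (by linarith)
    have hsθ : s ≤ θ := by
      rw [hs_def, hθ_def, hρ_def]
      have := aux_s_le αn (R H) d hαn hR hd0 hdb
      convert this using 3 <;> ring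
    set z : En n := bH H + s⁻¹ • (y - bH H) with hz_def
    have hsinv : s⁻¹ - 1 = (ρ/2)/(d + ρ/4) := by
      rw [hs_def, inv_div, div_sub_one hnum.ne']
      ring
    have hzy : z - y = (s⁻¹ - 1) • (y - bH H) := by
      rw [hz_def, sub_smul, one_smul]
      abel
    have hzynorm : ‖z - y‖ ≤ ρ/2 := by
      rw [hzy, norm_smul, Real.norm_eq_abs, abs_of_nonneg (by
        rw [hsinv]; positivity)]
      rw [hsinv, div_mul_eq_mul_div, div_le_iff₀ hnum]
      exact mul_le_mul_of_nonneg_left (by linarith) (by positivity)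
    have hznorm : ‖z‖ < ρ := by
      calc ‖z‖ = ‖y + (z - y)‖ := by rw [add_sub_cancel]
        _ ≤ ‖y‖ + ‖z - y‖ := norm_add_le _ _
        _ < ρ := by
            have : αn/4 * R H = ρ/4 := by rw [hρ_def]; ring
            linarith [hy', hzynorm, this ▸ hy']
    have hzball : z ∈ Metric.ball (0 : En n) ((n : ℝ) ^ (-(3:ℝ)/2) * R H) := by
      rw [mem_ball_zero_iff]
      exact hznorm
    obtain ⟨w, hw, hAw⟩ := (hJohn H hH).1 hzball
    -- the preimage point
    refine ⟨(s • w, t), ⟨ht2, ?_⟩, ?_⟩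
    · -- u (s • w) t < H
      have hcx := hconv0.2 (Set.mem_univ w) (Set.mem_univ (0 : En n)) hs0.le
        (show (0:ℝ) ≤ 1 - s by linarith) (by ring)
      have hx0 : u (s • w) 0 ≤ s * u w 0 := by
        simpa [smul_zero, hu0, smul_eq_mul] using hcx
      have hsH : s * u w 0 ≤ s * H := mul_le_mul_of_nonneg_left hw.le hs0.le
      have hsθH : s * H ≤ θ * H := mul_le_mul_of_nonneg_right hsθ hH.le
      have hAt := (hA (s • w) t ht2).2
      have hmt : m₂ * (-t) < (1-θ) * H / 2 := by
        have h1 : -t < (1-θ)/(2*m₂) * H := by linarith [ht.1]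
        have h2 : m₂ * (-t) < m₂ * ((1-θ)/(2*m₂) * H) :=
          (mul_lt_mul_iff_right₀ hm₂).mpr h1
        have h3 : m₂ * ((1-θ)/(2*m₂) * H) = (1-θ) * H / 2 := by
          field_simp
        linarith
      have hθH : θ * H < H := by nlinarith [mul_lt_mul_of_pos_right hθ1 hH]
      linarith [mul_pos h1θ hH]
    · -- image equality
      have himg : PMA.mApply (aH H) (s • w) + bH H = y := by
        rw [mApply_smul']
        have hAw' : PMA.mApply (aH H) w = z - bH H := by
          rw [eq_sub_iff_add_eq]; exact hAw
        rw [hAw', hz_def]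
        rw [add_sub_cancel_left, smul_smul, mul_inv_cancel₀ hs0.ne', one_smul]
        abel
      exact Prod.ext himg rfl
  · -- second inclusion
    rintro ⟨y, t⟩ ⟨⟨x, τ⟩, ⟨hτ, hu⟩, heqimg⟩
    obtain ⟨hy, htq⟩ : PMA.mApply (aH H) x + bH H = y ∧ τ = t := by
      simpa [Prod.ext_iff] using heqimg
    subst hy; subst htq
    constructor
    · have hx0 : u x 0 < H := lt_of_le_of_lt (hmono x τ hτ) hu
      exact (hJohn H hH).2 ⟨x, hx0, rfl⟩
    · refine ⟨?_, hτ⟩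
      have h1 := (hA x τ hτ).1
      have h2 := hnn x
      have hlt : m₁ * (-τ) < H := by linarith
      have : -τ < 1/m₁ * H := by
        rw [one_div, inv_mul_eq_div, lt_div_iff₀ hm₁]
        nlinarith
      linarith
end
end

section
/- Let u ∈ C^{2,1}(ℝ^{n+1}_−) be a parabolically convex solution of −u_t det D_x²u = f in ℝ^{n+1}_− with u_t < 0 and D_x²u > 0, where f(x,t) = f₁(x)f₂(t) with f₁ positive and 1-periodic in each coordinate direction. Then for every e ∈ E, the second-order difference quotient Δ_e²u satisfies (1/u_t)·D_t(Δ_e²u) + ∑_{i,j} u^{ij}·D_{x_ix_j}(Δ_e²u) ≥ 0 in ℝ^{n+1}_−, where (u^{ij}) denotes the inverse matrix of D_x²u. -/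
open Set MeasureTheory

noncomputable section

section myAux

open Finset Matrix

variable {E F : Type*} [NormedAddCommGroup E] [NormedSpace ℝ E]
  [NormedAddCommGroup F] [NormedSpace ℝ F]

lemma my_fderiv_comp_add_right (g : E → F) (e x : E) :
    fderiv ℝ (fun y => g (y + e)) x = fderiv ℝ g (x + e) := by
  by_cases h : DifferentiableAt ℝ g (x + e)
  · have h1 : HasFDerivAt (fun y : E => y + e) (ContinuousLinearMap.id ℝ E) x :=
      (hasFDerivAt_id x).add_const e
    have h2 := h.hasFDerivAt.comp x h1
    simpa [Function.comp_def] using h2.fderiv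
  · rw [fderiv_zero_of_not_differentiableAt h, fderiv_zero_of_not_differentiableAt]
    intro hc
    apply h
    have h3 : DifferentiableAt ℝ ((fun y => g (y + e)) ∘ (fun y : E => y - e)) (x + e) := by
      apply DifferentiableAt.comp
      · simpa using hc
      · exact differentiable_id.sub_const e |>.differentiableAt
    have h4 : ((fun y => g (y + e)) ∘ (fun y : E => y - e)) = g := by
      funext y; simp
    rwa [h4] at h3

lemma my_iteratedFDeriv_comp_add_right (k : ℕ) (g : E → F) (e : E) (x : E) :
    iteratedFDeriv ℝ k (fun y => g (y + e)) x = iteratedFDeriv ℝ k g (x + e) := by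
  induction k generalizing x with
  | zero => ext m; simp
  | succ k ih =>
    ext m
    rw [iteratedFDeriv_succ_apply_left, iteratedFDeriv_succ_apply_left]
    have key : fderiv ℝ (iteratedFDeriv ℝ k (fun y => g (y + e))) x
        = fderiv ℝ (iteratedFDeriv ℝ k g) (x + e) := by
      have h5 : (iteratedFDeriv ℝ k (fun y => g (y + e)))
          = fun y => iteratedFDeriv ℝ k g (y + e) := funext fun y => ih y
      rw [h5, my_fderiv_comp_add_right]
    rw [key]

lemma my_scalar_key {n : ℕ} (μ : Fin n → ℝ) (hμ : ∀ i, 0 < μ i) :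
    (n : ℝ) + 1 ≤ (∏ i, μ i)⁻¹ + ∑ i, μ i := by
  have hp : 0 < ∏ i, μ i := Finset.prod_pos fun i _ => hμ i
  have h1 : Real.log (∏ i, μ i) ≤ (∑ i, μ i) - n := by
    rw [Real.log_prod fun i _ => (hμ i).ne']
    calc ∑ i, Real.log (μ i) ≤ ∑ i, (μ i - 1) :=
          Finset.sum_le_sum fun i _ => Real.log_le_sub_one_of_pos (hμ i)
      _ = (∑ i, μ i) - n := by rw [Finset.sum_sub_distrib]; simp
  have h2 : -Real.log (∏ i, μ i) ≤ (∏ i, μ i)⁻¹ - 1 := by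
    have := Real.log_le_sub_one_of_pos (inv_pos.mpr hp)
    rwa [Real.log_inv] at this
  linarith

lemma my_trace_eq_sum_eigenvalues {n : ℕ} {M : Matrix (Fin n) (Fin n) ℝ} (hM : M.IsHermitian) :
    M.trace = ∑ i, hM.eigenvalues i := by
  simpa using hM.trace_eq_sum_eigenvalues

open scoped MatrixOrder in
lemma my_matrix_key {n : ℕ} {A B : Matrix (Fin n) (Fin n) ℝ} (hA : A.PosDef) (hB : B.PosDef) :
    (n : ℝ) + 1 ≤ B.det⁻¹ * A.det + (A⁻¹ * B).trace := by
  set S := CFC.sqrt A with hSdef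
  have hS2 : S * S = A := CFC.sqrt_mul_sqrt_self A hA.posSemidef.nonneg
  have hSps : S.PosSemidef := (CFC.sqrt_nonneg A).posSemidef
  have hSH : S⁻¹.IsHermitian := hSps.1.inv
  have hdetS : S.det ≠ 0 := by
    intro h
    have : A.det = 0 := by rw [← hS2, Matrix.det_mul, h, mul_zero]
    exact hA.det_pos.ne' this
  have hSinv2 : S⁻¹ * S⁻¹ = A⁻¹ := by rw [← Matrix.mul_inv_rev, hS2]
  set M := S⁻¹ * B * S⁻¹ with hMdef
  have hMps : M.PosSemidef := by
    have := hB.posSemidef.mul_mul_conjTranspose_same S⁻¹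
    rwa [hSH.eq] at this
  have hdetM : M.det = A.det⁻¹ * B.det := by
    have hdetSinv : S⁻¹.det = S.det⁻¹ := by
      rw [Matrix.det_nonsing_inv, Ring.inverse_eq_inv']
    rw [hMdef, Matrix.det_mul, Matrix.det_mul, hdetSinv]
    have : A.det = S.det * S.det := by rw [← hS2, Matrix.det_mul]
    rw [this]
    field_simp
  have htrM : M.trace = (A⁻¹ * B).trace := by
    rw [hMdef, Matrix.trace_mul_cycle, hSinv2]
  have hdetMpos : 0 < M.det := by
    rw [hdetM]
    exact mul_pos (inv_pos.mpr hA.det_pos) hB.det_pos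
  set μ := hMps.1.eigenvalues with hμdef
  have hprod : ∏ i, μ i = M.det := by
    rw [hMps.1.det_eq_prod_eigenvalues]; simp; rfl
  have hsum : ∑ i, μ i = M.trace := (my_trace_eq_sum_eigenvalues hMps.1).symm
  have hμpos : ∀ i, 0 < μ i := by
    intro i
    rcases lt_or_eq_of_le (hMps.eigenvalues_nonneg i) with h | h
    · exact h
    · exfalso
      have : ∏ j, μ j = 0 := Finset.prod_eq_zero (Finset.mem_univ i) h.symm
      rw [hprod] at this
      exact hdetMpos.ne' this
  have hkey := my_scalar_key μ hμpos
  rw [hprod, hsum, htrM, hdetM] at hkey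
  have hrw : (A.det⁻¹ * B.det)⁻¹ = B.det⁻¹ * A.det := by
    rw [mul_inv, inv_inv, mul_comm]
  rw [hrw] at hkey
  exact hkey

lemma my_sum_eq_trace {n : ℕ} {A C : Matrix (Fin n) (Fin n) ℝ} (hA : A.IsHermitian) :
    ∑ i, ∑ j, A i j * C i j = (A * C).trace := by
  have hsym : ∀ i j, A i j = A j i := by
    intro i j
    conv_lhs => rw [← hA.eq]
    simp [Matrix.conjTranspose_apply]
  rw [Matrix.trace]
  simp only [Matrix.diag_apply, Matrix.mul_apply]
  rw [Finset.sum_comm]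
  apply Finset.sum_congr rfl
  intro j _
  apply Finset.sum_congr rfl
  intro i _
  rw [hsym i j, mul_comm]

lemma my_per_single {n : ℕ} (f₁ : En n → ℝ)
    (hf₁per : ∀ (x : En n) (i : Fin n), f₁ (x + EuclideanSpace.single i 1) = f₁ x)
    (k : ℤ) (i : Fin n) : ∀ x : En n, f₁ (x + (k : ℝ) • EuclideanSpace.single i 1) = f₁ x := by
  have hsub : ∀ y : En n, f₁ (y - EuclideanSpace.single i 1) = f₁ y := by
    intro y
    have := hf₁per (y - EuclideanSpace.single i 1) i
    rw [sub_add_cancel] at this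
    exact this.symm ▸ rfl
  induction k using Int.induction_on with
  | zero => intro x; simp
  | succ k ih =>
    intro x
    have h1 : x + (((k : ℤ) + 1 : ℤ) : ℝ) • EuclideanSpace.single i (1:ℝ)
        = (x + ((k : ℤ) : ℝ) • EuclideanSpace.single i 1) + EuclideanSpace.single i 1 := by
      push_cast
      module
    rw [h1, hf₁per]
    exact ih x
  | pred k ih =>
    intro x
    have h1 : x + ((-(k : ℤ) - 1 : ℤ) : ℝ) • EuclideanSpace.single i (1:ℝ)
        = (x + ((-(k:ℤ) : ℤ) : ℝ) • EuclideanSpace.single i 1) - EuclideanSpace.single i 1 := by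
      push_cast
      module
    rw [h1, hsub]
    exact ih x

lemma my_decomp {n : ℕ} (e : En n) :
    e = ∑ i, (e i) • EuclideanSpace.single i (1 : ℝ) := by
  apply PiLp.ext
  intro j
  rw [WithLp.ofLp_sum, Finset.sum_apply]
  simp [EuclideanSpace.single_apply]

lemma my_periodic {n : ℕ} (f₁ : En n → ℝ)
    (hf₁per : ∀ (x : En n) (i : Fin n), f₁ (x + EuclideanSpace.single i 1) = f₁ x)
    (e : En n) (he : ∀ i, ∃ k : ℤ, e i = (k : ℝ)) (x : En n) :
    f₁ (x + e) = f₁ x := by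
  choose g hg using he
  have key : ∀ (s : Finset (Fin n)) (x : En n),
      f₁ (x + ∑ i ∈ s, (e i) • EuclideanSpace.single i (1:ℝ)) = f₁ x := by
    intro s
    induction s using Finset.induction_on with
    | empty => intro x; simp
    | insert a s hni ih =>
      intro x
      rw [Finset.sum_insert hni]
      have h2 : x + ((e a) • EuclideanSpace.single a (1:ℝ)
          + ∑ i ∈ s, (e i) • EuclideanSpace.single i (1:ℝ))
          = (x + (e a) • EuclideanSpace.single a (1:ℝ))
            + ∑ i ∈ s, (e i) • EuclideanSpace.single i (1:ℝ) := by
        rw [add_assoc]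
      rw [h2, ih]
      rw [hg a]
      exact my_per_single f₁ hf₁per (g a) a x
  have := key Finset.univ x
  rwa [← my_decomp] at this

end myAux

/-- the second-order difference quotient `Δ_e²u` is a subsolution of the
linearized equation. -/
theorem stmt12
    (n : ℕ) (f₁ : En n → ℝ) (f₂ : ℝ → ℝ)
    (hf₁pos : ∀ x, 0 < f₁ x)
    (hf₁per : ∀ (x : En n) (i : Fin n), f₁ (x + EuclideanSpace.single i 1) = f₁ x)
    (u : En n → ℝ → ℝ)
    (hureg : PMA.IsC2kOn 1 u (PMA.halfSpace n))
    (huconv : PMA.ParabolicallyConvexOn (PMA.halfSpace n) u)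
    (hut : ∀ (x : En n) (t : ℝ), t ≤ 0 → PMA.timeDeriv u x t < 0)
    (hhess : ∀ (x : En n) (t : ℝ), t ≤ 0 → (PMA.spaceHess u x t).PosDef)
    (heq : ∀ (x : En n) (t : ℝ), t ≤ 0 →
      -PMA.timeDeriv u x t * (PMA.spaceHess u x t).det = f₁ x * f₂ t) :
    ∀ e : En n, (∀ i, ∃ k : ℤ, e i = (k : ℝ)) → e ≠ 0 →
    ∀ (x : En n) (t : ℝ), t ≤ 0 →
      0 ≤ (PMA.timeDeriv u x t)⁻¹ * PMA.timeDeriv (PMA.sdq u e) x t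
          + ∑ i, ∑ j, (PMA.spaceHess u x t)⁻¹ i j * PMA.spaceHess (PMA.sdq u e) x t i j := by
  intro e he he0 x t ht
  have hmem : ∀ y : En n, (y, t) ∈ PMA.halfSpace n := fun y => ⟨trivial, ht⟩
  have hc0 : (0:ℝ) < ‖e‖^2 := by
    have : ‖e‖ ≠ 0 := norm_ne_zero_iff.mpr he0
    positivity
  -- time differentiability
  have hdt : ∀ y : En n, DifferentiableAt ℝ (u y) t := by
    intro y
    have h := ((hureg 0 1 (by norm_num)).1 (y, t) (hmem y)).2
    exact h.differentiableAt (by norm_num)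
  -- time derivative of sdq
  have hT : PMA.timeDeriv (PMA.sdq u e) x t =
      (PMA.timeDeriv u (x + e) t + PMA.timeDeriv u (x - e) t
        - 2 * PMA.timeDeriv u x t) / ‖e‖ ^ 2 := by
    show deriv (fun s => (u (x + e) s + u (x - e) s - 2 * u x s) / ‖e‖ ^ 2) t = _
    rw [deriv_div_const, deriv_fun_sub ((hdt _).fun_add (hdt _)) ((hdt _).const_mul 2),
      deriv_fun_add (hdt _) (hdt _), deriv_const_mul 2 (hdt _)]
    rfl
  -- spatial regularity
  have hv : ContDiff ℝ (2:ℕ) (fun y => u y t) := by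
    rw [contDiff_iff_contDiffAt]
    intro y
    have h := ((hureg 2 0 (by norm_num)).1 (y, t) (hmem y)).1
    simpa [iteratedDeriv_zero] using h
  have hg1 : ContDiff ℝ (2:ℕ) (fun y => (fun z => u z t) (y + e)) :=
    hv.comp (contDiff_id.add contDiff_const)
  have hg2 : ContDiff ℝ (2:ℕ) (fun y => (fun z => u z t) (y + -e)) :=
    hv.comp (contDiff_id.add contDiff_const)
  -- Hessian of sdq
  have hH : ∀ i j, PMA.spaceHess (PMA.sdq u e) x t i j
      = (PMA.spaceHess u (x + e) t i j + PMA.spaceHess u (x - e) t i j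
        - 2 * PMA.spaceHess u x t i j) / ‖e‖ ^ 2 := by
    intro i j
    have hfun : (fun y => PMA.sdq u e y t)
        = fun y => (‖e‖^2)⁻¹ • ((fun z => u z t) (y + e)
            + ((fun z => u z t) (y + -e) + (-2:ℝ) • (fun z => u z t) y)) := by
      funext y
      simp only [PMA.sdq, smul_eq_mul, sub_eq_add_neg]
      ring_nf
    show iteratedFDeriv ℝ 2 (fun y => PMA.sdq u e y t) x
        ![EuclideanSpace.single i 1, EuclideanSpace.single j 1] = _
    rw [hfun]
    rw [iteratedFDeriv_const_smul_apply'
      (hg1.add (hg2.add (hv.const_smul (-2:ℝ)))).contDiffAt]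
    rw [iteratedFDeriv_add_apply' hg1.contDiffAt (hg2.add (hv.const_smul (-2:ℝ))).contDiffAt]
    rw [iteratedFDeriv_add_apply' hg2.contDiffAt (hv.const_smul (-2:ℝ)).contDiffAt]
    rw [iteratedFDeriv_const_smul_apply' hv.contDiffAt]
    rw [my_iteratedFDeriv_comp_add_right 2 (fun z => u z t) e x,
      my_iteratedFDeriv_comp_add_right 2 (fun z => u z t) (-e) x,
      ← sub_eq_add_neg]
    show (‖e‖^2)⁻¹ • (iteratedFDeriv ℝ 2 (fun z => u z t) (x + e)
        ![EuclideanSpace.single i 1, EuclideanSpace.single j 1]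
      + (iteratedFDeriv ℝ 2 (fun z => u z t) (x - e)
        ![EuclideanSpace.single i 1, EuclideanSpace.single j 1]
      + (-2:ℝ) • iteratedFDeriv ℝ 2 (fun z => u z t) x
        ![EuclideanSpace.single i 1, EuclideanSpace.single j 1])) = _
    unfold PMA.spaceHess
    simp only [smul_eq_mul]
    ring
  rw [hT]
  simp only [hH]
  -- abbreviations
  set a := PMA.timeDeriv u x t with hadef
  set bp := PMA.timeDeriv u (x + e) t with hbpdef
  set bm := PMA.timeDeriv u (x - e) t with hbmdef
  set A := PMA.spaceHess u x t with hAdef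
  set Bp := PMA.spaceHess u (x + e) t with hBpdef
  set Bm := PMA.spaceHess u (x - e) t with hBmdef
  have hApd : A.PosDef := hhess x t ht
  have hBppd : Bp.PosDef := hhess (x + e) t ht
  have hBmpd : Bm.PosDef := hhess (x - e) t ht
  have ha : a < 0 := hut x t ht
  have ha0 : a ≠ 0 := ha.ne
  have hbp : bp < 0 := hut (x + e) t ht
  have hbm : bm < 0 := hut (x - e) t ht
  -- equation transfer via periodicity
  have hfperp : f₁ (x + e) = f₁ x := my_periodic f₁ hf₁per e he x
  have hfperm : f₁ (x - e) = f₁ x := by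
    have he' : ∀ i, ∃ k : ℤ, (-e) i = (k : ℝ) := by
      intro i
      obtain ⟨k, hk⟩ := he i
      exact ⟨-k, by simp [hk]⟩
    have := my_periodic f₁ hf₁per (-e) he' x
    rwa [← sub_eq_add_neg] at this
  have hEqp : bp * Bp.det = a * A.det := by
    have h1 := heq (x + e) t ht
    have h2 := heq x t ht
    rw [hfperp, ← h2] at h1
    linear_combination -h1
  have hEqm : bm * Bm.det = a * A.det := by
    have h1 := heq (x - e) t ht
    have h2 := heq x t ht
    rw [hfperm, ← h2] at h1
    linear_combination -h1
  have hratiop : a⁻¹ * bp = Bp.det⁻¹ * A.det := by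
    rw [inv_mul_eq_div, inv_mul_eq_div, div_eq_div_iff ha0 hBppd.det_pos.ne']
    linear_combination hEqp
  have hratiom : a⁻¹ * bm = Bm.det⁻¹ * A.det := by
    rw [inv_mul_eq_div, inv_mul_eq_div, div_eq_div_iff ha0 hBmpd.det_pos.ne']
    linear_combination hEqm
  -- traces
  have hAinvH : (A⁻¹).IsHermitian := hApd.isHermitian.inv
  have hsump : ∑ i, ∑ j, A⁻¹ i j * Bp i j = (A⁻¹ * Bp).trace := my_sum_eq_trace hAinvH
  have hsumm : ∑ i, ∑ j, A⁻¹ i j * Bm i j = (A⁻¹ * Bm).trace := my_sum_eq_trace hAinvH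
  have hsumA : ∑ i, ∑ j, A⁻¹ i j * A i j = (n : ℝ) := by
    rw [my_sum_eq_trace hAinvH, Matrix.nonsing_inv_mul A
      ((Matrix.isUnit_iff_isUnit_det _).mp hApd.isUnit), Matrix.trace_one]
    simp
  have hsplit : ∑ i, ∑ j, A⁻¹ i j * ((Bp i j + Bm i j - 2 * A i j) / ‖e‖ ^ 2)
      = ((A⁻¹ * Bp).trace + (A⁻¹ * Bm).trace - 2 * (n : ℝ)) / ‖e‖ ^ 2 := by
    have step : ∀ i j, A⁻¹ i j * ((Bp i j + Bm i j - 2 * A i j) / ‖e‖ ^ 2)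
        = (A⁻¹ i j * Bp i j + A⁻¹ i j * Bm i j - 2 * (A⁻¹ i j * A i j)) / ‖e‖ ^ 2 := by
      intro i j; ring
    simp only [step, ← Finset.sum_div]
    rw [← hsump, ← hsumm, ← hsumA]
    congr 1
    simp only [Finset.sum_sub_distrib, Finset.sum_add_distrib, ← Finset.mul_sum]
  rw [hsplit]
  have hdiv : a⁻¹ * ((bp + bm - 2 * a) / ‖e‖ ^ 2)
      = (a⁻¹ * bp + a⁻¹ * bm - 2) / ‖e‖ ^ 2 := by
    field_simp
  rw [hdiv, ← add_div]
  apply div_nonneg _ hc0.le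
  have k1 := my_matrix_key hApd hBppd
  have k2 := my_matrix_key hApd hBmpd
  rw [← hratiop] at k1
  rw [← hratiom] at k2
  linarith
end
end

section
/- Let u ∈ C^{2,1}(ℝ^{n+1}_−) be a parabolically convex solution of −u_t det D_x²u = f in ℝ^{n+1}_− with u_t < 0 and D_x²u > 0, where f(x,t) = f₁(x)f₂(t) with f₂ positive and 1-periodic. Then for every (x,t) ∈ ℝ^{n+1}_− and every positive integer k, the quotient Δ_k^tu(x,t) := (u(x,t) − u(x,t−k))/k satisfies both (1/u_t(x,t−k))·D_t(Δ_k^tu) + ∑_{i,j} u^{ij}(x,t−k)·D_{x_ix_j}(Δ_k^tu) ≥ 0 and (1/u_t(x,t))·D_t(Δ_k^tu) + ∑_{i,j} u^{ij}(x,t)·D_{x_ix_j}(Δ_k^tu) ≤ 0, where (u^{ij}) denotes the inverse matrix of D_x²u. -/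
open Set MeasureTheory

noncomputable section

lemma sum_sum_eq_trace {m : ℕ} (M N : Matrix (Fin m) (Fin m) ℝ) (hN : N.IsHermitian) :
    ∑ i, ∑ j, M i j * N i j = (M * N).trace := by
  simp only [Matrix.trace, Matrix.diag, Matrix.mul_apply]
  refine Finset.sum_congr rfl fun i _ => Finset.sum_congr rfl fun j _ => ?_
  have := hN.apply j i
  simp only [star_trivial] at this
  rw [this]

lemma hermitian_trace_eq_sum_eigenvalues {m : ℕ} {C : Matrix (Fin m) (Fin m) ℝ}
    (hC : C.IsHermitian) : C.trace = ∑ i, hC.eigenvalues i := by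
  simpa using hC.trace_eq_sum_eigenvalues

open scoped MatrixOrder in
lemma core_ineq {m : ℕ} {a b : ℝ} {A B : Matrix (Fin m) (Fin m) ℝ}
    (ha : a < 0) (hb : b < 0) (hA : A.PosDef) (hB : B.PosDef)
    (hdet : a * A.det = b * B.det) :
    0 ≤ a⁻¹ * (b - a) + ∑ i, ∑ j, A⁻¹ i j * (B i j - A i j) := by
  classical
  set S := CFC.sqrt A with hSdef
  have hSS : S * S = A := CFC.sqrt_mul_sqrt_self A hA.posSemidef.nonneg
  have hdetA : 0 < A.det := hA.det_pos
  have hdetB : 0 < B.det := hB.det_pos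
  have hdetS : S.det * S.det = A.det := by rw [← Matrix.det_mul, hSS]
  have hdetSne : S.det ≠ 0 := by
    intro h; rw [h, mul_zero] at hdetS; exact hdetA.ne (hdetS)
  have hSHerm : S.IsHermitian := by have h := (CFC.sqrt_nonneg A).1; rwa [sub_zero] at h
  have hSinvHerm : (S⁻¹).conjTranspose = S⁻¹ := by
    rw [Matrix.conjTranspose_nonsing_inv, hSHerm.eq]
  set C := S⁻¹ * B * S⁻¹ with hCdef
  have hCpsd : C.PosSemidef := by
    have := hB.posSemidef.mul_mul_conjTranspose_same S⁻¹
    rwa [hSinvHerm] at this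
  have hCH : C.IsHermitian := hCpsd.isHermitian
  -- determinant of C
  have hdetC : C.det = B.det / A.det := by
    rw [hCdef, Matrix.det_mul, Matrix.det_mul, Matrix.det_nonsing_inv,
      Ring.inverse_eq_inv']
    rw [← hdetS]; field_simp
  have hdetCpos : 0 < C.det := by rw [hdetC]; positivity
  -- eigenvalues of C
  set lam := hCH.eigenvalues with hlamdef
  have hprod : ∏ i, lam i = C.det := by
    have := hCH.det_eq_prod_eigenvalues
    simpa using this.symm
  have hlampos : ∀ i, 0 < lam i := by
    intro i
    rcases lt_or_eq_of_le (hCpsd.eigenvalues_nonneg i) with h | h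
    · exact h
    · exfalso
      have : ∏ j, lam j = 0 := Finset.prod_eq_zero (Finset.mem_univ i) h.symm
      rw [hprod] at this; exact hdetCpos.ne' this
  have hsum : ∑ i, lam i = C.trace := (hermitian_trace_eq_sum_eigenvalues hCH).symm
  -- trace identities
  have hAinv : A⁻¹ = S⁻¹ * S⁻¹ := by rw [← hSS, Matrix.mul_inv_rev]
  have hAdetUnit : IsUnit A.det := isUnit_iff_ne_zero.mpr hdetA.ne'
  have htraceAB : (A⁻¹ * B).trace = C.trace := by
    rw [hCdef, Matrix.trace_mul_cycle, hAinv, Matrix.mul_assoc]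
  have htraceAA : (A⁻¹ * A).trace = (m : ℝ) := by
    rw [Matrix.nonsing_inv_mul A hAdetUnit, Matrix.trace_one]; simp
  have hkey : ∑ i, ∑ j, A⁻¹ i j * (B i j - A i j) = C.trace - m := by
    have hBA : (B - A).IsHermitian := hB.isHermitian.sub hA.isHermitian
    have h := sum_sum_eq_trace A⁻¹ (B - A) hBA
    simp only [Matrix.sub_apply] at h
    rw [h, Matrix.mul_sub, Matrix.trace_sub, htraceAB, htraceAA]
  rw [hkey]
  -- the numeric inequality
  set μ := b / a with hμdef
  have hμpos : 0 < μ := div_pos_of_neg_of_neg hb ha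
  have hμP : μ * C.det = 1 := by
    rw [hμdef, hdetC]
    rw [div_mul_div_comm, ← hdet, div_self (mul_ne_zero ha.ne hdetA.ne')]
  have hlog0 : Real.log μ + ∑ i, Real.log (lam i) = 0 := by
    rw [← Real.log_prod (fun i _ => (hlampos i).ne'),
      ← Real.log_mul hμpos.ne' (by rw [hprod]; exact hdetCpos.ne'), hprod, hμP, Real.log_one]
  have h1 : Real.log μ ≤ μ - 1 := Real.log_le_sub_one_of_pos hμpos
  have h2 : ∑ i, Real.log (lam i) ≤ ∑ i, (lam i - 1) :=
    Finset.sum_le_sum fun i _ => Real.log_le_sub_one_of_pos (hlampos i)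
  have h3 : ∑ i, (lam i - 1) = C.trace - m := by
    rw [Finset.sum_sub_distrib, hsum]; simp
  have hab : a⁻¹ * (b - a) = μ - 1 := by
    rw [hμdef, inv_mul_eq_div, sub_div, div_self ha.ne]
  rw [hab]
  rw [h3] at h2
  linarith

/-- the first-order time difference quotient `Δ_k^t u` is both a subsolution
and a supersolution of the corresponding linearized equations. -/
theorem stmt17
    (n : ℕ) (f₁ : En n → ℝ) (f₂ : ℝ → ℝ)
    (hf₂pos : ∀ t : ℝ, t ≤ 0 → 0 < f₂ t)
    (hf₂per : ∀ t : ℝ, t ≤ 0 → f₂ (t - 1) = f₂ t)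
    (u : En n → ℝ → ℝ)
    (hureg : PMA.IsC2kOn 1 u (PMA.halfSpace n))
    (huconv : PMA.ParabolicallyConvexOn (PMA.halfSpace n) u)
    (hut : ∀ (x : En n) (t : ℝ), t ≤ 0 → PMA.timeDeriv u x t < 0)
    (hhess : ∀ (x : En n) (t : ℝ), t ≤ 0 → (PMA.spaceHess u x t).PosDef)
    (heq : ∀ (x : En n) (t : ℝ), t ≤ 0 →
      -PMA.timeDeriv u x t * (PMA.spaceHess u x t).det = f₁ x * f₂ t) :
    ∀ (x : En n) (t : ℝ), t ≤ 0 → ∀ k : ℕ, 0 < k →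
      0 ≤ (PMA.timeDeriv u x (t - k))⁻¹
            * PMA.timeDeriv (fun y s => (u y s - u y (s - k)) / k) x t
          + ∑ i, ∑ j, (PMA.spaceHess u x (t - k))⁻¹ i j
            * PMA.spaceHess (fun y s => (u y s - u y (s - k)) / k) x t i j ∧
      (PMA.timeDeriv u x t)⁻¹
            * PMA.timeDeriv (fun y s => (u y s - u y (s - k)) / k) x t
          + ∑ i, ∑ j, (PMA.spaceHess u x t)⁻¹ i j
            * PMA.spaceHess (fun y s => (u y s - u y (s - k)) / k) x t i j ≤ 0 := by
  
  intro x t ht k hk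
  have hkr : (0:ℝ) < (k:ℝ) := by exact_mod_cast hk
  have ht' : t - (k:ℝ) ≤ 0 := by linarith
  -- regularity consequences
  have hmem : ∀ (y : En n) (s : ℝ), s ≤ 0 → (y, s) ∈ PMA.halfSpace n := by
    intro y s hs; exact ⟨Set.mem_univ _, hs⟩
  have hC2 : ∀ s : ℝ, s ≤ 0 → ContDiff ℝ 2 (fun y => u y s) := by
    intro s hs
    rw [contDiff_iff_contDiffAt]
    intro y
    have h := ((hureg 2 0 (by norm_num)).1 (y, s) (hmem y s hs)).1
    simpa [iteratedDeriv_zero] using h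
  have hCt : ∀ (y : En n) (s : ℝ), s ≤ 0 → DifferentiableAt ℝ (u y) s := by
    intro y s hs
    have h := ((hureg 0 1 (by norm_num)).1 (y, s) (hmem y s hs)).2
    exact h.differentiableAt (by norm_num)
  -- periodicity of f₂
  have hper : ∀ (m : ℕ) (s : ℝ), s ≤ 0 → f₂ (s - m) = f₂ s := by
    intro m
    induction m with
    | zero => intro s _; simp
    | succ p ih =>
        intro s hs
        have hp : (0:ℝ) ≤ (p:ℝ) := Nat.cast_nonneg p
        have h1 : s - ((p+1 : ℕ) : ℝ) = (s - p) - 1 := by push_cast; ring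
        rw [h1, hf₂per (s - p) (by linarith)]
        exact ih s hs
  -- notation
  set a := PMA.timeDeriv u x (t - (k:ℝ)) with hadef
  set b := PMA.timeDeriv u x t with hbdef
  set A := PMA.spaceHess u x (t - (k:ℝ)) with hAdef
  set B := PMA.spaceHess u x t with hBdef
  have ha : a < 0 := hut x (t - k) ht'
  have hb : b < 0 := hut x t ht
  have hA : A.PosDef := hhess x (t - k) ht'
  have hB : B.PosDef := hhess x t ht
  have hdet' : a * A.det = b * B.det := by
    have h1 := heq x (t - k) ht'
    have h2 := heq x t ht
    rw [hper k t ht] at h1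
    rw [← hbdef, ← hBdef] at h2
    rw [← hadef, ← hAdef] at h1
    nlinarith [h1, h2]
  -- time derivative of the quotient
  have hd1 : DifferentiableAt ℝ (u x) t := hCt x t ht
  have hd2 : DifferentiableAt ℝ (fun s => u x (s - (k:ℝ))) t := by
    exact DifferentiableAt.comp t (hCt x (t - k) ht') (differentiableAt_id.sub_const _)
  have hderiv : PMA.timeDeriv (fun y s => (u y s - u y (s - (k:ℝ))) / (k:ℝ)) x t
      = (b - a) / (k:ℝ) := by
    show deriv (fun s => (u x s - u x (s - (k:ℝ))) / (k:ℝ)) t = _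
    have hfun : (fun s => (u x s - u x (s - (k:ℝ))) / (k:ℝ))
        = fun s => ((k:ℝ))⁻¹ * (u x s - u x (s - (k:ℝ))) := by
      funext s; exact div_eq_inv_mul _ _
    rw [hfun, deriv_const_mul _ (d := fun s => u x s - u x (s - (k:ℝ))) (hd1.sub hd2), deriv_fun_sub hd1 hd2, deriv_comp_sub_const]
    rw [hbdef, hadef, PMA.timeDeriv, PMA.timeDeriv, inv_mul_eq_div]
  -- spatial Hessian of the quotient
  have hF : ContDiff ℝ 2 (fun y => u y t) := hC2 t ht
  have hG : ContDiff ℝ 2 (fun y => u y (t - (k:ℝ))) := hC2 _ ht'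
  have hhessq : ∀ i j, PMA.spaceHess (fun y s => (u y s - u y (s - (k:ℝ))) / (k:ℝ)) x t i j
      = (B i j - A i j) / (k:ℝ) := by
    intro i j
    show iteratedFDeriv ℝ 2 (fun y => (u y t - u y (t - (k:ℝ))) / (k:ℝ)) x _ = _
    have hfun : (fun y => (u y t - u y (t - (k:ℝ))) / (k:ℝ))
        = fun y => ((k:ℝ))⁻¹ • u y t + (-((k:ℝ))⁻¹) • u y (t - (k:ℝ)) := by
      funext y
      rw [smul_eq_mul, smul_eq_mul, div_eq_inv_mul]; ring
    rw [hfun, iteratedFDeriv_add_apply' (hF.const_smul (((k:ℝ))⁻¹)).contDiffAt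
        (hG.const_smul (-((k:ℝ))⁻¹)).contDiffAt,
      iteratedFDeriv_const_smul_apply' hF.contDiffAt, iteratedFDeriv_const_smul_apply' hG.contDiffAt]
    rw [hBdef, hAdef, PMA.spaceHess, PMA.spaceHess]
    simp only [ContinuousMultilinearMap.smul_apply, ContinuousMultilinearMap.add_apply,
      smul_eq_mul]
    rw [div_eq_inv_mul]; ring
  rw [hderiv]
  simp only [hhessq]
  constructor
  · have hcore := core_ineq ha hb hA hB hdet'
    simp only [← mul_div_assoc, ← Finset.sum_div, ← add_div]
    exact div_nonneg hcore hkr.le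
  · have hcore := core_ineq hb ha hB hA hdet'.symm
    simp only [← mul_div_assoc, ← Finset.sum_div, ← add_div]
    have hs : ∀ i j : Fin n, B⁻¹ i j * (B i j - A i j) = -(B⁻¹ i j * (A i j - B i j)) :=
      fun i j => by ring
    have hnum : b⁻¹ * (b - a) + ∑ i, ∑ j, B⁻¹ i j * (B i j - A i j) ≤ 0 := by
      simp only [hs, Finset.sum_neg_distrib]
      linarith
    exact div_nonpos_iff.mpr (Or.inr ⟨hnum, hkr.le⟩)
end
end
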